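/- Let P be an LR-vine and let P̂ = {U_a : a ∈ P} be the family of complete unions ordered by set inclusion. Then the map a ↦ U_a is a poset isomorphism from P onto P̂. -/

import Mathlib

/-- The `i`-th associated graph of a graded poset: vertices are the elements of rank `i`,
with `a` and `b` adjacent when they are (distinct, of rank `i` and) covered by a common
element (which then has cover-set `{a, b}`). -/
def coverGraph {P : Type*} [PartialOrder P] (rk : P → ℕ) (i : ℕ) : SimpleGraph P where
  Adj a b := a ≠ b ∧ rk a = i ∧ rk b = i ∧ ∃ v : P, a ⋖ v ∧ b ⋖ v
  symm := by
    constructor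
    rintro a b ⟨hne, ha, hb, v, h1, h2⟩
    exact ⟨hne.symm, hb, ha, v, h2, h1⟩
  loopless := by constructor; rintro a ⟨hne, -⟩; exact hne rfl

/-- A vine: a finite graded poset (with rank function `rk`, minimal elements of rank 1)
in which every non-minimal node covers exactly two nodes, any two distinct nodes of the
same rank are covered by at most one common node, and each associated graph is a
forest. -/
structure IsVine {P : Type*} [PartialOrder P] [Finite P] (rk : P → ℕ) : Prop where
  rk_strictMono : ∀ x y : P, x < y → rk x < rk y
  rk_covBy : ∀ x y : P, x ⋖ y → rk y = rk x + 1
  rk_min : ∀ x : P, IsMin x → rk x = 1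
  covers_two : ∀ v : P, ¬ IsMin v → {a : P | a ⋖ v}.ncard = 2
  cover_unique : ∀ a b : P, a ≠ b → rk a = rk b →
    ∀ v w : P, a ⋖ v → b ⋖ v → a ⋖ w → b ⋖ w → v = w
  forest : ∀ i : ℕ, (coverGraph rk i).IsAcyclic

/-- The rank of a graded poset: the largest rank of an element. -/
noncomputable def vineRank {P : Type*} (rk : P → ℕ) : ℕ := sSup (Set.range rk)

/-- The proximity condition: any two distinct nodes of the same rank `≥ 2` that are
covered by a common node themselves cover a common node. -/
def Proximity {P : Type*} [PartialOrder P] (rk : P → ℕ) : Prop :=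
  ∀ a b : P, a ≠ b → rk a = rk b → 2 ≤ rk a →
    (∃ v : P, a ⋖ v ∧ b ⋖ v) → ∃ c : P, c ⋖ a ∧ c ⋖ b

/-- A regular vine (R-vine): a vine whose rank equals its dimension (the number of
minimal elements), whose associated forests (for `1 ≤ i ≤ rank`) are trees, and
which satisfies the proximity condition. -/
structure IsRVine {P : Type*} [PartialOrder P] [Finite P] (rk : P → ℕ)
    extends IsVine rk : Prop where
  rank_eq_dim : vineRank rk = {x : P | IsMin x}.ncard
  tree : ∀ i : ℕ, 1 ≤ i → i ≤ vineRank rk →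
    ((coverGraph rk i).induce {x : P | rk x = i}).Connected
  proximity : Proximity rk

/-- A locally regular vine (LR-vine): a vine all of whose principal ideals
(with the induced order and rank) are R-vines. -/
def IsLRVine {P : Type*} [PartialOrder P] [Finite P] (rk : P → ℕ) : Prop :=
  IsVine rk ∧ ∀ v : P, IsRVine (P := {x : P // x ≤ v}) (fun x => rk x.val)

/-- The complete union of a node: the set of minimal elements below it. -/
def completeUnion {P : Type*} [PartialOrder P] (a : P) : Set P :=
  {x : P | IsMin x ∧ x ≤ a}

/-- The conditioned set of a (non-minimal) node `v`: the minimal elements lying below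
exactly one of the two nodes covered by `v` (the symmetric difference of the complete
unions of the two covered nodes). -/
def conditionedSet {P : Type*} [PartialOrder P] (v : P) : Set P :=
  {m : P | IsMin m ∧ ∃! a : P, a ⋖ v ∧ m ≤ a}

/-!
Order is reflected by induction on `a`. If `U_a ⊆ U_b` and `a` covers `c ≠ d`, then `c, d ≤ b` by
induction. The rank-`rk c` tree of the R-vine `↓b` joins `c` to `d`; its path is also a path in
the corresponding forest of `P`, where `c` and `d` are adjacent through `a`. Since a forest has
unique paths, that path is this single edge. So `c` and `d` have a common cover `v ≤ b`, and
`v = a` because common covers are unique.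
-/

namespace SimpleGraph

variable {V W : Type*} {G : SimpleGraph V} {H : SimpleGraph W}

theorem IsAcyclic.adj_of_reachable_of_injective (hG : G.IsAcyclic) (f : H →g G)
    (hf : Function.Injective f) {x y : W} (hxy : H.Reachable x y) (hadj : G.Adj (f x) (f y)) :
    H.Adj x y := by
  classical
  obtain ⟨p⟩ := hxy
  have hunique := (hG.subsingleton_path _ _).elim
    ⟨p.toPath.1.map f, p.toPath.2.map hf⟩ (Path.singleton hadj)
  exact Walk.adj_of_length_eq_one (by simpa using congrArg (·.1.length) hunique)

end SimpleGraph

section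

variable {P : Type*} [PartialOrder P]

theorem coe_covBy_coe_iff {b : P} {x y : {z : P // z ≤ b}} : (x : P) ⋖ y ↔ x ⋖ y :=
  Set.OrdConnected.apply_covBy_apply_iff (OrderEmbedding.subtype (· ≤ b))
    (by simpa [Set.Iic] using Set.ordConnected_Iic (a := b))

def coverGraph.idealHom (rk : P → ℕ) (b : P) (i : ℕ) :
    coverGraph (fun x : {z : P // z ≤ b} => rk x) i →g coverGraph rk i where
  toFun := Subtype.val
  map_rel' := fun ⟨hne, hx, hy, v, hxv, hyv⟩ =>
    ⟨Subtype.val_injective.ne hne, hx, hy, v, coe_covBy_coe_iff.2 hxv, coe_covBy_coe_iff.2 hyv⟩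

theorem completeUnion_mono : Monotone (completeUnion : P → Set P) :=
  fun _ _ hab _ hm => ⟨hm.1, hm.2.trans hab⟩

namespace IsVine

variable [Finite P] {rk : P → ℕ}

theorem one_le_rk (hv : IsVine rk) (x : P) : 1 ≤ rk x := by
  obtain ⟨m, hmx, hm⟩ := exists_minimal_le_of_wellFoundedLT (fun _ : P => True) x trivial
  rw [← hv.rk_min m (minimal_true.1 hm)]
  exact hmx.eq_or_lt.elim (fun h => h ▸ le_rfl) fun h => (hv.rk_strictMono _ _ h).le

theorem exists_ne_covBy (hv : IsVine rk) {a : P} (ha : ¬IsMin a) :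
    ∃ c d, c ≠ d ∧ c ⋖ a ∧ d ⋖ a := by
  obtain ⟨c, d, hcd, hset⟩ := Set.ncard_eq_two.1 (hv.covers_two a ha)
  have hmem : ∀ x, x ⋖ a ↔ x = c ∨ x = d := fun x => by
    simpa using Set.ext_iff.1 hset x
  exact ⟨c, d, hcd, (hmem c).2 (.inl rfl), (hmem d).2 (.inr rfl)⟩

end IsVine

namespace IsLRVine

variable [Finite P] {rk : P → ℕ}

theorem le_of_covBy_of_le (h : IsLRVine rk) {a b c d : P} (hcd : c ≠ d) (hca : c ⋖ a)
    (hda : d ⋖ a) (hcb : c ≤ b) (hdb : d ≤ b) : a ≤ b := by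
  have hrk : rk c = rk d := by
    have := h.1.rk_covBy _ _ hca; have := h.1.rk_covBy _ _ hda; omega
  set rk' : {z : P // z ≤ b} → ℕ := fun x => rk x
  have hi : rk c ≤ vineRank rk' := le_csSup (Set.finite_range rk').bddAbove ⟨⟨c, hcb⟩, rfl⟩
  have hreach : ((coverGraph rk' (rk c)).induce {x | rk' x = rk c}).Reachable
      ⟨⟨c, hcb⟩, rfl⟩ ⟨⟨d, hdb⟩, hrk.symm⟩ :=
    ((h.2 b).tree _ (h.1.one_le_rk c) hi).preconnected _ _
  have hadj : (coverGraph rk' (rk c)).Adj ⟨c, hcb⟩ ⟨d, hdb⟩ :=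
    (h.1.forest (rk c)).adj_of_reachable_of_injective (coverGraph.idealHom rk b _)
      Subtype.val_injective (hreach.map (SimpleGraph.Embedding.induce _).toHom)
      ⟨hcd, rfl, hrk.symm, a, hca, hda⟩
  obtain ⟨-, -, -, v, hcv, hdv⟩ := hadj
  rw [← h.1.cover_unique c d hcd hrk v a (coe_covBy_coe_iff.2 hcv) (coe_covBy_coe_iff.2 hdv)
    hca hda]
  exact v.2

theorem le_of_completeUnion_subset (h : IsLRVine rk) {a b : P}
    (hab : completeUnion a ⊆ completeUnion b) : a ≤ b := by
  induction a using WellFoundedLT.induction with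
  | _ a ih =>
  by_cases ha : IsMin a
  · exact (hab ⟨ha, le_rfl⟩).2
  obtain ⟨c, d, hcd, hca, hda⟩ := h.1.exists_ne_covBy ha
  exact h.le_of_covBy_of_le hcd hca hda
    (ih c hca.lt ((completeUnion_mono hca.le).trans hab))
    (ih d hda.lt ((completeUnion_mono hda.le).trans hab))

end IsLRVine

end

/-- For an LR-vine `P`, the map `a ↦ U_a` is a poset isomorphism from `P` onto the
family `P̂ = {U_a : a ∈ P}` of complete unions, ordered by set inclusion. -/
theorem orderIso_completeUnion {P : Type*} [PartialOrder P] [Finite P]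
    (rk : P → ℕ) (h : IsLRVine rk) :
    ∃ φ : P ≃o {S : Set P // ∃ a : P, S = completeUnion a},
      ∀ a : P, (φ a : Set P) = completeUnion a := by
  let e : P ↪o {S : Set P // ∃ a : P, S = completeUnion a} :=
    OrderEmbedding.ofMapLEIff (fun a => ⟨completeUnion a, a, rfl⟩)
      fun _ _ => ⟨h.le_of_completeUnion_subset, (completeUnion_mono ·)⟩
  exact ⟨OrderIso.ofSurjective e (by rintro ⟨_, a, rfl⟩; exact ⟨a, rfl⟩), fun _ => rfl⟩
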